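/- arXiv:1602.04545 — 7 statements merged into one kernel-verified Lean document; each statement's English description precedes it below -/
import Mathlib

section
/- Over a finite field F_q of odd characteristic p, for any positive integers n and k, the identity F_{n p^k}(1,x) = (F_n(1,x))^{p^k} (1-4x)^{(p^k-1)/2} holds as functions on F_q (in fact on any extension field). -/
def F3 {K : Type*} [Field K] (x : K) : ℕ → K
  | 0 => 0
  | 1 => 1
  | (n + 2) => F3 x (n + 1) - x * F3 x n

/-!
In `A = K[ω]/(ω² - ω + x)` the two roots `ω` and `1 - ω` of `T² - T + x` give the Binet formula
`ωⁿ - (1 - ω)ⁿ = Fₙ δ` with `δ = 2ω - 1` and `δ² = 1 - 4x`. Raising it to the power `Q = pᵏ`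
and using the Frobenius, `F_{nQ} δ = Fₙ^Q δ^Q = Fₙ^Q (1 - 4x)^((Q-1)/2) δ`, and `δ` can be
cancelled against scalars by comparing constant coordinates.
-/

open QuadraticAlgebra

namespace QuadraticAlgebra

variable {R : Type*} [CommRing R] (x : R)

lemma omega_sq_of_trace_one : (ω : QuadraticAlgebra R (-x) 1) ^ 2 = ω - algebraMap R _ x := by
  rw [sq, omega_mul_omega_eq_algebraMap, map_neg, map_one, one_mul, neg_add_eq_sub]

lemma one_sub_omega_sq_of_trace_one :
    (1 - ω : QuadraticAlgebra R (-x) 1) ^ 2 = (1 - ω) - algebraMap R _ x := by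
  linear_combination omega_sq_of_trace_one x

lemma two_omega_sub_one_sq_of_trace_one :
    (2 * ω - 1 : QuadraticAlgebra R (-x) 1) ^ 2 = algebraMap R _ (1 - 4 * x) := by
  rw [map_sub, map_mul, map_one, map_ofNat]
  linear_combination 4 * omega_sq_of_trace_one x

lemma re_algebraMap_mul_two_omega_sub_one (r : R) :
    (algebraMap R (QuadraticAlgebra R (-x) 1) r * (2 * ω - 1)).re = -r := by
  simp

end QuadraticAlgebra

section

variable {K : Type*} [Field K] (x : K)

lemma omega_pow_sub_one_sub_omega_pow_eq_F3 (n : ℕ) :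
    (ω : QuadraticAlgebra K (-x) 1) ^ n - (1 - ω) ^ n = algebraMap K _ (F3 x n) * (2 * ω - 1) := by
  induction n using Nat.twoStepInduction with
  | zero => simp [F3]
  | one => rw [F3, map_one]; ring
  | more n ih₀ ih₁ =>
    rw [F3, map_sub, map_mul]
    linear_combination ih₁ - algebraMap K _ x * ih₀ + (ω : QuadraticAlgebra K (-x) 1) ^ n *
      omega_sq_of_trace_one x - (1 - ω : QuadraticAlgebra K (-x) 1) ^ n *
      one_sub_omega_sq_of_trace_one x

theorem F3_mul_expChar_pow (q : ℕ) [ExpChar K q] (hq : Odd q) (n k : ℕ) :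
    F3 x (n * q ^ k) = F3 x n ^ q ^ k * (1 - 4 * x) ^ ((q ^ k - 1) / 2) := by
  let A := QuadraticAlgebra K (-x) 1
  have : ExpChar A q := expChar_of_injective_algebraMap algebraMap_injective q
  obtain ⟨m, hm⟩ := hq.pow (n := k)
  have key : algebraMap K A (F3 x (n * q ^ k)) * (2 * ω - 1) =
      algebraMap K A (F3 x n ^ q ^ k * (1 - 4 * x) ^ m) * (2 * ω - 1) := by
    rw [← omega_pow_sub_one_sub_omega_pow_eq_F3, pow_mul, pow_mul, ← sub_pow_expChar_pow,
      omega_pow_sub_one_sub_omega_pow_eq_F3, mul_pow, hm, pow_succ (2 * ω - 1 : A), pow_mul,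
      two_omega_sub_one_sq_of_trace_one, map_mul, map_pow, map_pow]
    ring
  have hm' : (q ^ k - 1) / 2 = m := by omega
  rw [hm']
  simpa only [A, re_algebraMap_mul_two_omega_sub_one, neg_inj] using congrArg re key

end

theorem stmt4_general {K : Type*} [Field K] (p : ℕ) (hp : p.Prime) (hodd : p ≠ 2)
    [CharP K p] (n k : ℕ) (x : K) :
    F3 x (n * p ^ k) = (F3 x n) ^ (p ^ k) * (1 - 4 * x) ^ ((p ^ k - 1) / 2) := by
  have := Fact.mk hp
  exact F3_mul_expChar_pow x p (hp.odd_of_ne_two hodd) n k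

theorem stmt4 {K : Type*} [Field K] [Fintype K] (p : ℕ) (hp : p.Prime) (hodd : p ≠ 2)
    [CharP K p] (n k : ℕ) (hn : 0 < n) (hk : 0 < k) (x : K) :
    F3 x (n * p ^ k) = (F3 x n) ^ (p ^ k) * (1 - 4 * x) ^ ((p ^ k - 1) / 2) :=
  stmt4_general p hp hodd n k x
end

section
/- Let F_q be a finite field of odd characteristic. If n_1 and n_2 are positive integers with n_1 \equiv n_2 (mod q^2 - 1), then F_{n_1}(1,x_0) = F_{n_2}(1,x_0) for every x_0 \in F_q with x_0 \ne 1/4. -/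
lemma F3_closed {K : Type*} [Field K] (x α β : K) (hs : α + β = 1) (hp : α * β = x) :
    ∀ n, (α - β) * F3 x n = α ^ n - β ^ n := by
  intro n
  induction n using Nat.twoStepInduction with
  | zero => simp [F3]
  | one => simp [F3]
  | more n ih0 ih1 =>
    show (α - β) * (F3 x (n+1) - x * F3 x n) = _
    linear_combination ih1 - x * ih0 + (α ^ n - β ^ n) * hp +
      (β ^ (n+1) - α ^ (n+1)) * hs

lemma F3_map {K L : Type*} [Field K] [Field L] (f : K →+* L) (x : K) :
    ∀ n, f (F3 x n) = F3 (f x) n := by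
  intro n
  induction n using Nat.twoStepInduction with
  | zero => simp [F3]
  | one => simp [F3]
  | more n ih0 ih1 =>
    show f (F3 x (n+1) - x * F3 x n) = F3 (f x) (n+1) - f x * F3 (f x) n
    rw [map_sub, map_mul, ih0, ih1]

lemma F3_key {K : Type*} [Field K] [Fintype K] (x α β : K) (hs : α + β = 1)
    (hp : α * β = x) (hd : α ≠ β) (hα : α ≠ 0) (hβ : β ≠ 0) {n₁ n₂ : ℕ}
    (hcong : n₁ ≡ n₂ [MOD Fintype.card K - 1]) : F3 x n₁ = F3 x n₂ := by
  set k := Fintype.card K - 1 with hk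
  have hpow : ∀ a : K, a ≠ 0 → a ^ n₁ = a ^ n₂ := by
    intro a ha
    have h1 : a ^ k = 1 := FiniteField.pow_card_sub_one_eq_one a ha
    have key : ∀ n : ℕ, a ^ n = a ^ (n % k) := by
      intro n
      conv_lhs => rw [← Nat.div_add_mod n k]
      rw [pow_add, pow_mul, h1, one_pow, one_mul]
    rw [key n₁, key n₂, hcong]
  have h1 := F3_closed x α β hs hp n₁
  have h2 := F3_closed x α β hs hp n₂
  have : (α - β) * F3 x n₁ = (α - β) * F3 x n₂ := by
    rw [h1, h2, hpow α hα, hpow β hβ]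
  exact mul_left_cancel₀ (sub_ne_zero.mpr hd) this

lemma F3_periodic_aux {K : Type*} [Field K] [Fintype K] (x e : K) (h2 : (2 : K) ≠ 0)
    (hx : x ≠ 0) (he : e ^ 2 = 1 - 4 * x) (he0 : e ≠ 0) {n₁ n₂ : ℕ}
    (hcong : n₁ ≡ n₂ [MOD Fintype.card K - 1]) : F3 x n₁ = F3 x n₂ := by
  set α := (1 + e) / 2 with hα_def
  set β := (1 - e) / 2 with hβ_def
  have hs : α + β = 1 := by rw [hα_def, hβ_def]; field_simp; ring
  have hp : α * β = x := by
    rw [hα_def, hβ_def]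
    field_simp
    linear_combination -he
  have hne : α ≠ β := by
    rw [hα_def, hβ_def]
    intro h
    apply he0
    have h2e : (2 : K) * e = 0 := by
      field_simp at h
      linear_combination h
    rcases mul_eq_zero.mp h2e with h' | h'
    · exact absurd h' h2
    · exact h'
  have hα : α ≠ 0 := fun h => hx (by rw [← hp, h, zero_mul])
  have hβ : β ≠ 0 := fun h => hx (by rw [← hp, h, mul_zero])
  exact F3_key x α β hs hp hne hα hβ hcong

lemma F3_zero {K : Type*} [Field K] : ∀ n, 0 < n → F3 (0 : K) n = 1 := by
  intro n
  induction n using Nat.twoStepInduction with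
  | zero => intro h; omega
  | one => intro _; simp [F3]
  | more n ih0 ih1 =>
    intro _
    show F3 (0:K) (n+1) - 0 * F3 (0:K) n = 1
    rw [zero_mul, sub_zero, ih1 (by omega)]

theorem stmt5 {K : Type*} [Field K] [Fintype K] (hchar : ringChar K ≠ 2)
    (n₁ n₂ : ℕ) (hn₁ : 0 < n₁) (hn₂ : 0 < n₂)
    (hcong : n₁ ≡ n₂ [MOD Fintype.card K ^ 2 - 1])
    (x₀ : K) (hx₀ : x₀ ≠ 1 / 4) :
    F3 x₀ n₁ = F3 x₀ n₂ := by
  have h2 : (2 : K) ≠ 0 := Ring.two_ne_zero hchar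
  set d : K := 1 - 4 * x₀ with hd_def
  have h4 : (4 : K) ≠ 0 := by
    intro h
    apply h2
    have h' : (2 : K) * 2 = 0 := by linear_combination h
    rcases mul_eq_zero.mp h' with h'' | h'' <;> exact h''
  have hd : d ≠ 0 := by
    intro h
    apply hx₀
    rw [eq_div_iff h4]
    linear_combination -h
  by_cases hsq : ∃ e : K, e ^ 2 = d
  · obtain ⟨e, he⟩ := hsq
    have he0 : e ≠ 0 := by
      intro h; rw [h] at he; simp at he; exact hd he.symm
    rcases eq_or_ne x₀ 0 with hx0 | hx0
    · rw [hx0, F3_zero n₁ hn₁, F3_zero n₂ hn₂]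
    · have hdvd : Fintype.card K - 1 ∣ Fintype.card K ^ 2 - 1 := by
        simpa using Nat.sub_dvd_pow_sub_pow (Fintype.card K) 1 2
      exact F3_periodic_aux x₀ e h2 hx0 he he0 (hcong.of_dvd hdvd)
  · push_neg at hsq
    have hirr : Irreducible (Polynomial.X ^ 2 - Polynomial.C d) :=
      X_pow_sub_C_irreducible_of_prime Nat.prime_two hsq
    haveI := Fact.mk hirr
    have hne0 : (Polynomial.X ^ 2 - Polynomial.C d) ≠ 0 := hirr.ne_zero
    let L := AdjoinRoot (Polynomial.X ^ 2 - Polynomial.C d)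
    let pb : PowerBasis K L := AdjoinRoot.powerBasis hne0
    haveI : Module.Finite K L := pb.finite
    haveI : Fintype L := Module.fintypeOfFintype pb.basis
    have hdim : pb.dim = 2 := by
      simp [pb, AdjoinRoot.powerBasis_dim]
    have hcard : Fintype.card L = Fintype.card K ^ 2 := by
      rw [Module.card_fintype pb.basis, Fintype.card_fin, hdim]
    let f : K →+* L := algebraMap K L
    have hinj : Function.Injective f := f.injective
    apply hinj
    rw [F3_map, F3_map]
    have hfd : f d = 1 - 4 * f x₀ := by
      show f (1 - 4 * x₀) = _
      rw [map_sub, map_one, map_mul, map_ofNat]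
    have he : (AdjoinRoot.root (Polynomial.X ^ 2 - Polynomial.C d)) ^ 2
        = 1 - 4 * f x₀ := by
      have h0 := AdjoinRoot.eval₂_root (Polynomial.X ^ 2 - Polynomial.C d)
      simp only [Polynomial.eval₂_sub, Polynomial.eval₂_pow, Polynomial.eval₂_X,
        Polynomial.eval₂_C, sub_eq_zero] at h0
      rw [h0, ← hfd]
      rfl
    have h2L : (2 : L) ≠ 0 := by
      intro h
      apply h2
      apply hinj
      rw [map_ofNat, map_zero]
      exact h
    have hx0 : x₀ ≠ 0 := by
      intro h
      exact hsq 1 (by rw [hd_def, h]; norm_num)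
    have hfx0 : f x₀ ≠ 0 := fun h => hx0 (hinj (by rw [h, map_zero]))
    have hdL : f d ≠ 0 := fun h => hd (hinj (by rw [h, map_zero]))
    have he0 : AdjoinRoot.root (Polynomial.X ^ 2 - Polynomial.C d) ≠ 0 := by
      intro h
      rw [h] at he
      apply hdL
      rw [hfd]
      linear_combination -he
    exact F3_periodic_aux (f x₀) _ h2L hfx0 he he0 (n₁ := n₁) (n₂ := n₂)
      (by rw [hcard]; exact hcong)
end

section
/- Let q = p^e with p an odd prime and let 1 \le k \le e. Then the map x \mapsto F_{p^k}(1,x) is a bijection of F_q if and only if gcd((p^k - 1)/2, q - 1) = 1. -/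
/-- Same recurrence in any commutative ring. -/
def G3 {R : Type*} [CommRing R] (x : R) : ℕ → R
  | 0 => 0
  | 1 => 1
  | (n + 2) => G3 x (n + 1) - x * G3 x n

lemma F3_eq_G3 {K : Type*} [Field K] (x : K) : ∀ n, F3 x n = G3 x n
  | 0 => rfl
  | 1 => rfl
  | (n + 2) => by
      show F3 x (n+1) - x * F3 x n = G3 x (n+1) - x * G3 x n
      rw [F3_eq_G3 x (n+1), F3_eq_G3 x n]

lemma G3_map {R S : Type*} [CommRing R] [CommRing S] (f : R →+* S) (x : R) :
    ∀ n, f (G3 x n) = G3 (f x) n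
  | 0 => by simp [G3]
  | 1 => by simp [G3]
  | (n + 2) => by
      show f (G3 x (n+1) - x * G3 x n) = G3 (f x) (n+1) - f x * G3 (f x) n
      rw [map_sub, map_mul, G3_map f x (n+1), G3_map f x n]

lemma G3_key {R : Type*} [CommRing R] (a b : R) (hab : a + b = 1) :
    ∀ n, (a - b) * G3 (a * b) n = a ^ n - b ^ n
  | 0 => by simp [G3]
  | 1 => by simp [G3]
  | (n + 2) => by
      have h1 := G3_key a b hab (n + 1)
      have h2 := G3_key a b hab n
      show (a - b) * (G3 (a*b) (n+1) - (a*b) * G3 (a*b) n) = _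
      calc (a - b) * (G3 (a*b) (n+1) - (a*b) * G3 (a*b) n)
          = (a - b) * G3 (a*b) (n+1) - (a*b) * ((a - b) * G3 (a*b) n) := by ring
        _ = (a ^ (n+1) - b ^ (n+1)) - (a*b) * (a ^ n - b ^ n) := by rw [h1, h2]
        _ = (a + b) * (a ^ (n+1) - b ^ (n+1)) - (a*b) * (a ^ n - b ^ n) := by rw [hab]; ring
        _ = a ^ (n+2) - b ^ (n+2) := by ring

open Polynomial in
lemma F3_closed_s6 {K : Type*} [Field K] (p : ℕ) (hp : p.Prime) (hodd : p ≠ 2)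
    [CharP K p] (k : ℕ) (x : K) :
    F3 x (p ^ k) = (1 - 4 * x) ^ ((p ^ k - 1) / 2) := by
  haveI : Fact p.Prime := ⟨hp⟩
  have h2 : (2 : K) ≠ 0 := by
    have : ¬ (p : ℕ) ∣ 2 := fun h =>
      hodd ((Nat.prime_dvd_prime_iff_eq hp Nat.prime_two).1 h)
    intro h0
    exact this ((CharP.cast_eq_zero_iff K p 2).1 (by exact_mod_cast h0))
  set N := p ^ k with hNdef
  have hN1 : 1 ≤ N := Nat.one_le_pow _ _ hp.pos
  have hNodd : Odd N := (hp.odd_of_ne_two hodd).pow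
  set m := (N - 1) / 2 with hmdef
  have h2m : 2 * m = N - 1 := Nat.mul_div_cancel' (Nat.Odd.sub_odd hNodd odd_one).two_dvd
  -- work in K[X]
  set u : K[X] := C ((2:K)⁻¹) with hu
  have h2u : (2 : K[X]) * u = 1 := by
    rw [hu, ← map_ofNat (C : K →+* K[X]) 2, ← map_mul, mul_inv_cancel₀ h2, map_one]
  set a : K[X] := u * (1 + X) with ha
  set b : K[X] := u * (1 - X) with hb
  have hab : a + b = 1 := by rw [ha, hb]; linear_combination h2u
  have hamb : a - b = X := by rw [ha, hb]; linear_combination X * h2u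
  have hx2 : 1 - 4 * (a * b) = X ^ 2 := by
    rw [ha, hb]; linear_combination (-(1 - X^2) * (2*u + 1)) * h2u
  have key : (X : K[X]) * G3 (a * b) N = X ^ N := by
    have := G3_key a b hab N
    rwa [hamb, ← sub_pow_char_pow, hamb] at this
  have key2 : G3 (a * b) N = (X ^ 2 : K[X]) ^ m := by
    apply mul_left_cancel₀ (X_ne_zero (R := K))
    rw [key, ← pow_mul, h2m, ← pow_succ']
    congr 1
    omega
  -- a * b is transcendental over K
  have habc : a * b = C ((2:K)⁻¹ * (2:K)⁻¹) * (1 - X ^ 2) := by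
    rw [ha, hb, map_mul]; ring
  have hdeg : (a * b).natDegree = 2 := by
    rw [habc]
    have : (1 - X ^ 2 : K[X]) = -(X ^ 2 - C 1) := by rw [map_one]; ring
    rw [natDegree_C_mul (by simp [h2]), this, natDegree_neg, natDegree_X_pow_sub_C]
  have htr : Transcendental K (a * b) := by
    apply Polynomial.transcendental
    · omega
    · refine mem_nonZeroDivisors_of_ne_zero ?_
      rw [Polynomial.leadingCoeff_ne_zero]
      intro h0
      rw [h0] at hdeg
      simp at hdeg
  have hinj : Function.Injective (aeval (a * b) : K[X] →ₐ[K] K[X]) :=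
    transcendental_iff_injective.mp htr
  -- polynomial identity
  have hpoly : G3 (X : K[X]) N = (1 - 4 * X : K[X]) ^ m := by
    apply hinj
    have e1 : (aeval (a * b) : K[X] →ₐ[K] K[X]) (G3 (X : K[X]) N)
        = G3 (a * b) N := by
      have := G3_map ((aeval (a * b) : K[X] →ₐ[K] K[X]) : K[X] →+* K[X]) (X : K[X]) N
      simpa using this
    rw [e1, key2]
    rw [map_pow, map_sub, map_mul, aeval_X, map_one]
    rw [show ((aeval (a*b)) (4 : K[X]) : K[X]) = 4 from map_ofNat _ 4, hx2]
  -- evaluate at x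
  have := G3_map (evalRingHom x) (X : K[X]) N
  rw [hpoly] at this
  simp only [coe_evalRingHom, eval_X] at this
  rw [F3_eq_G3, ← this]
  simp

lemma pow_map_bijective_iff {K : Type*} [Field K] [Fintype K] {m : ℕ} (hm : m ≠ 0) :
    Function.Bijective (fun y : K => y ^ m) ↔ Nat.Coprime m (Fintype.card K - 1) := by
  classical
  have hcardu : Nat.card Kˣ = Fintype.card K - 1 := by
    rw [Nat.card_eq_fintype_card, Fintype.card_units]
  constructor
  · intro hbij
    by_contra hcop
    obtain ⟨g, hg⟩ := IsCyclic.exists_ofOrder_eq_natCard (α := Kˣ)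
    have hd1 : Nat.gcd m (Nat.card Kˣ) ≠ 1 := fun h => hcop (hcardu ▸ h)
    have hdn : Nat.gcd m (Nat.card Kˣ) ∣ Nat.card Kˣ := Nat.gcd_dvd_right _ _
    have hdm : Nat.gcd m (Nat.card Kˣ) ∣ m := Nat.gcd_dvd_left _ _
    have hnpos : 0 < Nat.card Kˣ := Nat.card_pos
    have hd0 : 0 < Nat.gcd m (Nat.card Kˣ) := Nat.gcd_pos_of_pos_right _ hnpos
    obtain ⟨m', hm'⟩ := hdm
    obtain ⟨n', hn'⟩ := hdn
    have hqpos : 0 < Nat.card Kˣ / Nat.gcd m (Nat.card Kˣ) :=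
      Nat.div_pos (Nat.le_of_dvd hnpos ⟨n', hn'⟩) hd0
    have hqlt : Nat.card Kˣ / Nat.gcd m (Nat.card Kˣ) < Nat.card Kˣ :=
      Nat.div_lt_self hnpos (by omega)
    have hne : g ^ (Nat.card Kˣ / Nat.gcd m (Nat.card Kˣ)) ≠ 1 := by
      intro h
      have h2 := orderOf_dvd_of_pow_eq_one h
      rw [hg] at h2
      exact absurd (Nat.le_of_dvd hqpos h2) (by omega)
    have harith : Nat.card Kˣ / Nat.gcd m (Nat.card Kˣ) * m = Nat.card Kˣ * m' := by
      have h5 : ∀ d n mm a b : ℕ, 0 < d → mm = d * a → n = d * b → n / d * mm = n * a := by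
        intro d n mm a b h0 ha hb
        rw [ha, hb, Nat.mul_div_cancel_left _ h0]; ring
      exact h5 _ _ _ _ _ hd0 hm' hn'
    have hpow : (g ^ (Nat.card Kˣ / Nat.gcd m (Nat.card Kˣ))) ^ m = 1 := by
      rw [← pow_mul, harith, pow_mul, pow_card_eq_one', one_pow]
    have h3 := hbij.injective
      (a₁ := ((g ^ (Nat.card Kˣ / Nat.gcd m (Nat.card Kˣ)) : Kˣ) : K)) (a₂ := (1 : K))
      (by simp only [one_pow, ← Units.val_pow_eq_pow_val, hpow, Units.val_one])
    exact hne (Units.ext (by simpa using h3))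
  · intro hcop
    rw [Fintype.bijective_iff_injective_and_card]
    refine ⟨fun y z hyz => ?_, rfl⟩
    simp only at hyz
    rcases eq_or_ne z 0 with rfl | hz
    · rw [zero_pow hm] at hyz
      exact pow_eq_zero_iff hm |>.1 hyz
    rcases eq_or_ne y 0 with rfl | hy
    · rw [zero_pow hm] at hyz
      exact ((pow_eq_zero_iff hm).1 hyz.symm).symm
    have hcop' : (Nat.card Kˣ).Coprime m := by
      rw [hcardu]; exact hcop.symm
    have h4 := (powCoprime hcop').injective (a₁ := Units.mk0 y hy) (a₂ := Units.mk0 z hz)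
      (by ext; simpa [powCoprime] using hyz)
    simpa using congrArg Units.val h4

theorem stmt6 {K : Type*} [Field K] [Fintype K] (p e k : ℕ) (hp : p.Prime) (hodd : p ≠ 2)
    [CharP K p] (hcard : Fintype.card K = p ^ e) (hk1 : 1 ≤ k) (hke : k ≤ e) :
    Function.Bijective (fun x : K => F3 x (p ^ k)) ↔
      Nat.gcd ((p ^ k - 1) / 2) (Fintype.card K - 1) = 1 := by
  have h2 : (2 : K) ≠ 0 := by
    have hnd : ¬ (p : ℕ) ∣ 2 := fun h =>
      hodd ((Nat.prime_dvd_prime_iff_eq hp Nat.prime_two).1 h)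
    intro h0
    exact hnd ((CharP.cast_eq_zero_iff K p 2).1 (by exact_mod_cast h0))
  have h4 : (4 : K) ≠ 0 := by
    have : (4 : K) = 2 * 2 := by norm_num
    rw [this]
    exact mul_ne_zero h2 h2
  have hp3 : 3 ≤ p := by
    rcases hp.two_le.lt_or_eq with h | h
    · omega
    · omega
  have hpk3 : 3 ≤ p ^ k := le_trans hp3 (Nat.le_self_pow (by omega) p)
  have hm : (p ^ k - 1) / 2 ≠ 0 := by omega
  have hfun : (fun x : K => F3 x (p ^ k))
      = (fun y : K => y ^ ((p ^ k - 1) / 2)) ∘ (fun x : K => 1 - 4 * x) := by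
    funext x
    exact F3_closed_s6 p hp hodd k x
  have haff : Function.Bijective (fun x : K => 1 - 4 * x) := by
    rw [← Finite.injective_iff_bijective]
    intro x y hxy
    simp only at hxy
    have h5 : (4 : K) * x = 4 * y := by linear_combination -hxy
    exact mul_left_cancel₀ h4 h5
  rw [hfun, Function.Bijective.of_comp_iff _ haff]
  exact pow_map_bijective_iff hm
end

section
/- Let q = p^e with p an odd prime and let 1 \le k \le e. Then the map x \mapsto F_{2 p^k}(1,x) on F_q is a bijection if and only if gcd((p^k - 1)/2, q - 1) = 1. -/
theorem pow_left_bijective_iff_coprime {G : Type*} [Group G] [Finite G] {n : ℕ} :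
    Function.Bijective (· ^ n : G → G) ↔ (Nat.card G).Coprime n := by
  refine ⟨fun hbij => Nat.coprime_of_dvd fun ℓ hℓ hℓG hℓn => ?_,
    Nat.Coprime.pow_left_bijective⟩
  have := Fact.mk hℓ
  obtain ⟨g, hg⟩ := exists_prime_orderOf_dvd_card' ℓ hℓG
  have hg1 : g = 1 := hbij.injective <| by
    rw [one_pow, ← orderOf_dvd_iff_pow_eq_one, hg]
    exact hℓn
  rw [hg1, orderOf_one] at hg
  exact hℓ.one_lt.ne' hg.symm

theorem FiniteField.pow_bijective_iff_coprime {K : Type*} [Field K] [Fintype K] {n : ℕ}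
    (hn : n ≠ 0) : Function.Bijective (· ^ n : K → K) ↔ n.Coprime (Fintype.card K - 1) := by
  classical
  rw [Nat.coprime_comm, ← Fintype.card_units, ← Nat.card_eq_fintype_card,
    ← pow_left_bijective_iff_coprime, ← Finite.injective_iff_bijective,
    ← Finite.injective_iff_bijective]
  constructor
  · intro hinj u v huv
    exact Units.ext <| hinj <| by simpa using congrArg Units.val huv
  · intro hinj y z (hyz : y ^ n = z ^ n)
    have hzero : y = 0 ↔ z = 0 := by
      rw [← pow_eq_zero_iff hn, ← pow_eq_zero_iff (a := z) hn, hyz]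
    by_cases hy : y = 0
    · exact hy.trans (hzero.mp hy).symm
    have hz : z ≠ 0 := hzero.not.mp hy
    have := hinj (a₁ := Units.mk0 y hy) (a₂ := Units.mk0 z hz) (Units.ext (by simpa using hyz))
    simpa using congrArg Units.val this

theorem F3_add_two {K : Type*} [Field K] (x : K) (n : ℕ) :
    F3 x (n + 2) = F3 x (n + 1) - x * F3 x n := rfl

theorem sub_mul_algebraMap_F3 {K R : Type*} [Field K] [CommRing R] [Algebra K R] {x : K} {a : R}
    (ha : a * (1 - a) = algebraMap K R x) (n : ℕ) :
    (a - (1 - a)) * algebraMap K R (F3 x n) = a ^ n - (1 - a) ^ n := by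
  induction n using Nat.twoStepInduction with
  | zero => simp [F3]
  | one => simp [F3]
  | more n h0 h1 =>
    rw [F3_add_two, map_sub, map_mul]
    linear_combination h1 - algebraMap K R x * h0 + (a ^ n - (1 - a) ^ n) * ha

theorem two_pow_mul_F3_of_four_mul_eq_one {K : Type*} [Field K] {x : K} (hx : 4 * x = 1)
    (n : ℕ) : 2 ^ n * F3 x (n + 1) = n + 1 := by
  induction n using Nat.twoStepInduction with
  | zero => simp [F3]
  | one => norm_num [F3]
  | more n h0 h1 =>
    rw [F3_add_two]
    push_cast at h1 ⊢
    linear_combination 2 * h1 - 4 * x * h0 - (n + 1 : K) * hx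

theorem Nat.Prime.pow_sub_one_div_two_ne_zero {p k : ℕ} (hp : p.Prime) (hodd : p ≠ 2)
    (hk : k ≠ 0) : (p ^ k - 1) / 2 ≠ 0 := by
  have := Nat.le_self_pow hk p
  have := hp.two_le
  omega

section CharP

variable {K : Type*} [Field K] {p k : ℕ} [CharP K p]

theorem F3_two_mul_char_pow_of_four_mul_eq_one (hp : p.Prime) (hodd : p ≠ 2) (hk : k ≠ 0)
    {x : K} (hx : 4 * x = 1) : F3 x (2 * p ^ k) = 0 := by
  have h2 : (2 : K) ≠ 0 := Ring.two_ne_zero (by rw [ringChar.eq K p]; exact hodd)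
  have hq : 1 ≤ 2 * p ^ k := by have := Nat.one_le_pow k p hp.pos; omega
  have key := two_pow_mul_F3_of_four_mul_eq_one hx (2 * p ^ k - 1)
  rw [Nat.sub_add_cancel hq, Nat.cast_sub hq] at key
  push_cast at key
  rw [sub_add_cancel, CharP.cast_eq_zero, zero_pow hk, mul_zero] at key
  exact (mul_eq_zero.mp key).resolve_left (pow_ne_zero _ h2)

theorem F3_two_mul_char_pow_of_four_mul_ne_one (hp : p.Prime) (hodd : p ≠ 2) {x : K}
    (hx : 4 * x ≠ 1) : F3 x (2 * p ^ k) = (1 - 4 * x) ^ ((p ^ k - 1) / 2) := by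
  have := Fact.mk hp
  let L := AlgebraicClosure K
  have h2 : (2 : L) ≠ 0 := Ring.two_ne_zero (by rw [ringChar.eq L p]; exact hodd)
  obtain ⟨s, hs⟩ := IsAlgClosed.exists_eq_mul_self (algebraMap K L (1 - 4 * x))
  have hs0 : s ≠ 0 := by
    refine left_ne_zero_of_mul (hs ▸ (map_ne_zero _).mpr ?_)
    exact sub_ne_zero.mpr (Ne.symm hx)
  obtain ⟨a, ha⟩ : ∃ a : L, 2 * a = 1 + s := ⟨(1 + s) / 2, mul_div_cancel₀ _ h2⟩
  have hab : a - (1 - a) = s := by linear_combination ha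
  have hmul : a * (1 - a) = algebraMap K L x := by
    simp only [map_sub, map_mul, map_one, map_ofNat] at hs
    refine mul_left_cancel₀ (mul_ne_zero h2 h2) ?_
    linear_combination (1 - 2 * a - s) * ha + hs
  have hfrob : a ^ (2 * p ^ k) - (1 - a) ^ (2 * p ^ k) = s * (s * s) ^ ((p ^ k - 1) / 2) := by
    have hsub : a ^ p ^ k - (1 - a) ^ p ^ k = s ^ p ^ k := by rw [← sub_pow_char_pow, hab]
    have hadd : a ^ p ^ k + (1 - a) ^ p ^ k = 1 := by
      rw [← add_pow_char_pow, add_sub_cancel, one_pow]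
    obtain ⟨m, hm⟩ : Odd (p ^ k) := (hp.odd_of_ne_two hodd).pow
    calc a ^ (2 * p ^ k) - (1 - a) ^ (2 * p ^ k)
        = (a ^ p ^ k - (1 - a) ^ p ^ k) * (a ^ p ^ k + (1 - a) ^ p ^ k) := by ring
      _ = s * (s * s) ^ ((p ^ k - 1) / 2) := by
        rw [hsub, hadd, hm, show (2 * m + 1 - 1) / 2 = m by omega]
        ring
  have key := sub_mul_algebraMap_F3 hmul (2 * p ^ k)
  rw [hfrob, hab, ← hs, ← map_pow] at key
  exact (algebraMap K L).injective (mul_left_cancel₀ hs0 key)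

theorem F3_two_mul_char_pow (hp : p.Prime) (hodd : p ≠ 2) (hk : k ≠ 0) (x : K) :
    F3 x (2 * p ^ k) = (1 - 4 * x) ^ ((p ^ k - 1) / 2) := by
  by_cases hx : 4 * x = 1
  · rw [F3_two_mul_char_pow_of_four_mul_eq_one hp hodd hk hx, hx, sub_self,
      zero_pow (Nat.Prime.pow_sub_one_div_two_ne_zero hp hodd hk)]
  · exact F3_two_mul_char_pow_of_four_mul_ne_one hp hodd hx

end CharP

theorem stmt7_general {K : Type*} [Field K] [Fintype K] (p k : ℕ) (hp : p.Prime) (hodd : p ≠ 2)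
    [CharP K p] (hk1 : 1 ≤ k) :
    Function.Bijective (fun x : K => F3 x (2 * p ^ k)) ↔
      Nat.gcd ((p ^ k - 1) / 2) (Fintype.card K - 1) = 1 := by
  have h4 : (4 : K) ≠ 0 := by
    have h2 : (2 : K) ≠ 0 := Ring.two_ne_zero (by rw [ringChar.eq K p]; exact hodd)
    simpa [show (4 : K) = 2 * 2 by norm_num] using h2
  have hF : (fun x : K => F3 x (2 * p ^ k)) =
      (· ^ ((p ^ k - 1) / 2)) ∘ (fun x => 1 - 4 * x) :=
    funext (F3_two_mul_char_pow hp hodd (by omega))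
  have haff : Function.Bijective (fun x : K => 1 - 4 * x) :=
    (Equiv.subLeft 1).bijective.comp (Equiv.mulLeft₀ 4 h4).bijective
  rw [hF, Function.Bijective.of_comp_iff _ haff]
  exact FiniteField.pow_bijective_iff_coprime (hp.pow_sub_one_div_two_ne_zero hodd (by omega))

theorem stmt7 {K : Type*} [Field K] [Fintype K] (p e k : ℕ) (hp : p.Prime) (hodd : p ≠ 2)
    [CharP K p] (hcard : Fintype.card K = p ^ e) (hk1 : 1 ≤ k) (hke : k ≤ e) :
    Function.Bijective (fun x : K => F3 x (2 * p ^ k)) ↔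
      Nat.gcd ((p ^ k - 1) / 2) (Fintype.card K - 1) = 1 :=
  stmt7_general p k hp hodd hk1
end

section
/- Over a finite field F_q of odd characteristic, for every n the map x \mapsto F_n(1,x) is a bijection of F_q if and only if the map x \mapsto f_n(x) = \sum_{j \ge 0} \binom{n}{2j+1} x^j is a bijection of F_q. -/
section aux
variable {K : Type*} [Field K]

private def fS (n : ℕ) (y : K) : K := ∑ j ∈ Finset.range n, (Nat.choose n (2 * j + 1) : K) * y ^ j

private lemma fS_succ_succ (n : ℕ) (y : K) :
    fS (n + 2) y = 2 * fS (n + 1) y - (1 - y) * fS n y := by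
  have hext : ∀ m : ℕ, m ≤ n + 2 →
      fS m y = ∑ j ∈ Finset.range (n + 1), (Nat.choose m (2 * j + 1) : K) * y ^ j := by
    intro m hm
    unfold fS
    rcases Nat.lt_or_ge m (n + 1) with h | h
    · rw [← Finset.sum_subset (Finset.range_subset_range.2 h.le)]
      intro j hj hj'
      have : m < 2 * j + 1 := by
        simp only [Finset.mem_range, not_lt] at hj hj' ⊢
        omega
      rw [Nat.choose_eq_zero_of_lt this]; simp
    · rw [← Finset.sum_subset (Finset.range_subset_range.2 h)]
      intro j hj hj'
      simp only [Finset.mem_range, not_lt] at hj hj'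
      have : m < 2 * j + 1 := by omega
      rw [Nat.choose_eq_zero_of_lt this]; simp
  have hT : y * fS n y = ∑ j ∈ Finset.range n, (Nat.choose n (2 * j + 1) : K) * y ^ (j + 1) := by
    unfold fS
    rw [Finset.mul_sum]
    exact Finset.sum_congr rfl fun j _ => by ring
  have key : (1 - y) * fS n y
      = (∑ j ∈ Finset.range (n + 1), (Nat.choose n (2 * j + 1) : K) * y ^ j)
        - ∑ j ∈ Finset.range n, (Nat.choose n (2 * j + 1) : K) * y ^ (j + 1) := by
    rw [← hT, ← hext n (by omega)]; ring
  rw [hext (n + 2) le_rfl, hext (n + 1) (by omega), key]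
  rw [Finset.sum_range_succ' (fun j => (Nat.choose (n + 2) (2 * j + 1) : K) * y ^ j) n,
    Finset.sum_range_succ' (fun j => (Nat.choose (n + 1) (2 * j + 1) : K) * y ^ j) n,
    Finset.sum_range_succ' (fun j => (Nat.choose n (2 * j + 1) : K) * y ^ j) n]
  have hsum : (∑ i ∈ Finset.range n, (Nat.choose (n + 2) (2 * (i + 1) + 1) : K) * y ^ (i + 1))
      = 2 * (∑ i ∈ Finset.range n, (Nat.choose (n + 1) (2 * (i + 1) + 1) : K) * y ^ (i + 1))
        - (∑ i ∈ Finset.range n, (Nat.choose n (2 * (i + 1) + 1) : K) * y ^ (i + 1))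
        + ∑ i ∈ Finset.range n, (Nat.choose n (2 * i + 1) : K) * y ^ (i + 1) := by
    rw [Finset.mul_sum, ← Finset.sum_sub_distrib, ← Finset.sum_add_distrib]
    refine Finset.sum_congr rfl fun i _ => ?_
    have hi : 2 * (i + 1) + 1 = 2 * i + 3 := by ring
    rw [hi]
    have e1 : Nat.choose (n + 2) (2 * i + 3)
        = Nat.choose (n + 1) (2 * i + 2) + Nat.choose (n + 1) (2 * i + 3) :=
      Nat.choose_succ_succ (n + 1) (2 * i + 2)
    have e2 : Nat.choose (n + 1) (2 * i + 3)
        = Nat.choose n (2 * i + 2) + Nat.choose n (2 * i + 3) :=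
      Nat.choose_succ_succ n (2 * i + 2)
    have e3 : Nat.choose (n + 1) (2 * i + 2)
        = Nat.choose n (2 * i + 1) + Nat.choose n (2 * i + 2) :=
      Nat.choose_succ_succ n (2 * i + 1)
    rw [e1, e3]
    push_cast [e2]
    ring
  simp only [Nat.mul_zero, Nat.zero_add, pow_zero, Nat.choose_one_right, mul_one] at hsum ⊢
  rw [hsum]
  push_cast
  ring

private lemma F3_eq (n : ℕ) (x : K) : 2 ^ n * F3 x n = 2 * fS n (1 - 4 * x) := by
  induction n using Nat.twoStepInduction generalizing x with
  | zero => simp [F3, fS]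
  | one => simp [F3, fS]
  | more n ih1 ih2 =>
    rw [fS_succ_succ]
    have hF : F3 x (n + 2) = F3 x (n + 1) - x * F3 x n := rfl
    have h1 : (1 : K) - (1 - 4 * x) = 4 * x := by ring
    rw [hF, h1]
    have e1 := ih1 x
    have e2 := ih2 x
    have : (2:K) ^ (n + 2) * (F3 x (n + 1) - x * F3 x n)
        = 2 * (2 ^ (n+1) * F3 x (n+1)) - 4 * x * (2 ^ n * F3 x n) := by ring
    rw [this, e1, e2]; ring

end aux

theorem stmt14 {K : Type*} [Field K] [Fintype K] (hchar : ringChar K ≠ 2) (n : ℕ) :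
    Function.Bijective (fun x : K => F3 x n) ↔
      Function.Bijective (fun x : K =>
        ∑ j ∈ Finset.range n, (Nat.choose n (2 * j + 1) : K) * x ^ j) := by
  have h2 : (2 : K) ≠ 0 := Ring.two_ne_zero hchar
  have h4 : (-4 : K) ≠ 0 := by
    intro h
    apply h2
    have h44 : (4 : K) = 2 * 2 := by norm_num
    have h4' : (4 : K) = 0 := by linear_combination -h
    rcases mul_eq_zero.1 (h44 ▸ h4') with h | h <;> exact h
  have hc : (2 : K) / 2 ^ n ≠ 0 := div_ne_zero h2 (pow_ne_zero _ h2)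
  let e1 : K ≃ K := Equiv.mulLeft₀ _ hc
  let e2 : K ≃ K := (Equiv.mulLeft₀ _ h4).trans (Equiv.addLeft 1)
  have hfun : (fun x : K => F3 x n)
      = ⇑e1 ∘ (fun x : K => ∑ j ∈ Finset.range n, (Nat.choose n (2 * j + 1) : K) * x ^ j) ∘ ⇑e2 := by
    funext x
    simp only [Function.comp_apply, e1, e2, Equiv.trans_apply, Equiv.mulLeft₀_apply,
      Equiv.coe_addLeft]
    have hid := F3_eq n x
    have h2n : (2:K) ^ n ≠ 0 := pow_ne_zero _ h2
    have harg : (1 : K) + -4 * x = 1 - 4 * x := by ring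
    rw [harg]
    rw [show (∑ j ∈ Finset.range n, (Nat.choose n (2 * j + 1) : K) * (1 - 4 * x) ^ j)
        = fS n (1 - 4 * x) from rfl]
    field_simp
    linear_combination hid
  rw [hfun, Equiv.comp_bijective, Equiv.bijective_comp]
end

section
/- Let p be an odd prime, q a power of p, and n a nonnegative even integer with p not dividing n. If x \mapsto F_n(1,x) is a bijection of F_q, then n \equiv 0 (mod 4) and gcd(\lfloor (n-1)/2 \rfloor, q-1) = 1. -/
theorem Nat.coprime_card_of_forall_pow_eq_one {G : Type*} [Group G] [Finite G] {d : ℕ}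
    (h : ∀ g : G, g ^ d = 1 → g = 1) : d.Coprime (Nat.card G) := by
  refine Nat.coprime_of_dvd fun r hr hrd hrG => ?_
  have : Fact r.Prime := ⟨hr⟩
  obtain ⟨g, hg⟩ := exists_prime_orderOf_dvd_card' r hrG
  rw [h g (orderOf_dvd_iff_pow_eq_one.1 (hg ▸ hrd)), orderOf_one] at hg
  exact hr.one_lt.ne hg

theorem four_ne_zero_of_two_ne_zero {R : Type*} [Semiring R] [NoZeroDivisors R]
    (h2 : (2 : R) ≠ 0) : (4 : R) ≠ 0 :=
  (by norm_num : (2 : R) * 2 = 4) ▸ mul_ne_zero h2 h2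

section F3

variable {K : Type*} [Field K]

theorem F3_add_four (x : K) (k : ℕ) :
    F3 x (k + 4) = (1 - 2 * x) * F3 x (k + 2) - x ^ 2 * F3 x k := by
  simp only [F3]
  ring

theorem F3_zero_succ (k : ℕ) : F3 (0 : K) (k + 1) = 1 := by
  induction k with
  | zero => rfl
  | succ k ih => simp [F3, ih]

theorem two_pow_mul_F3_inv_four (h2 : (2 : K) ≠ 0) (n : ℕ) :
    2 ^ n * F3 (4⁻¹ : K) n = 2 * n := by
  induction n using Nat.twoStepInduction with
  | zero => simp [F3]
  | one => simp [F3]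
  | more n ih₀ ih₁ =>
    have h4 := four_ne_zero_of_two_ne_zero h2
    have hpow : (4 : K)⁻¹ * 2 ^ (n + 2) = 2 ^ n := by
      rw [pow_add]
      field_simp
      norm_num
    simp only [F3]
    push_cast at ih₁ ⊢
    linear_combination 2 * ih₁ - ih₀ - F3 4⁻¹ n * hpow

theorem F3_inv_two_add_four (h2 : (2 : K) ≠ 0) (k : ℕ) :
    F3 (2⁻¹ : K) (k + 4) = -4⁻¹ * F3 2⁻¹ k := by
  rw [F3_add_four, mul_inv_cancel₀ h2, sub_self, zero_mul, zero_sub, inv_pow]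
  norm_num

theorem F3_inv_two_four_mul_add_two_ne_zero (h2 : (2 : K) ≠ 0) (j : ℕ) :
    F3 (2⁻¹ : K) (4 * j + 2) ≠ 0 := by
  induction j with
  | zero => simp [F3]
  | succ j ih =>
    rw [show 4 * (j + 1) + 2 = 4 * j + 2 + 4 by ring, F3_inv_two_add_four h2]
    exact mul_ne_zero (neg_ne_zero.2 (inv_ne_zero (four_ne_zero_of_two_ne_zero h2))) ih

/- If `α, β` are the roots of `t² - t + x`, then `F3 x n = (αⁿ - βⁿ) / (α - β)` and
`1 - 4x = (α - β)²`; the roots of `t² - t + y` are `α / (α - β)` and `-β / (α - β)`. -/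
theorem F3_reciprocity {x y : K} (h : y * (1 - 4 * x) = -x) (k : ℕ) :
    (1 - 4 * x) ^ k * F3 y (2 * k) = (1 - 4 * x) * F3 x (2 * k) := by
  induction k using Nat.twoStepInduction with
  | zero => simp [F3]
  | one => simp [F3]
  | more k ih₀ ih₁ =>
    rw [show 2 * (k + 2) = 2 * k + 4 by ring, F3_add_four, F3_add_four]
    rw [show 2 * (k + 1) = 2 * k + 2 by ring] at ih₁
    have hu₁ : (1 - 4 * x) ^ 2 * (1 - 2 * y) = (1 - 4 * x) * (1 - 2 * x) := by
      linear_combination (-2 * (1 - 4 * x)) * h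
    have hu₂ : ((1 - 4 * x) * y) ^ 2 = x ^ 2 := by
      linear_combination (y * (1 - 4 * x) - x) * h
    linear_combination ((1 - 4 * x) * (1 - 2 * y)) * ih₁ + F3 x (2 * k + 2) * hu₁
      - ((1 - 4 * x) ^ 2 * y ^ 2) * ih₀ - ((1 - 4 * x) * F3 x (2 * k)) * hu₂

theorem sq_one_sub_four_mul_eq_one_of_injective {k : ℕ}
    (hinj : Function.Injective fun x : K => F3 x (2 * k)) {x : K} (hu : 1 - 4 * x ≠ 0)
    (h : (1 - 4 * x) ^ k * F3 x (2 * k) = (1 - 4 * x) * F3 x (2 * k)) :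
    (1 - 4 * x) ^ 2 = 1 := by
  have hy : -x / (1 - 4 * x) * (1 - 4 * x) = -x := div_mul_cancel₀ _ hu
  have hF : F3 (-x / (1 - 4 * x)) (2 * k) = F3 x (2 * k) :=
    mul_left_cancel₀ (pow_ne_zero k hu) ((F3_reciprocity hy k).trans h.symm)
  have hfix : -x / (1 - 4 * x) = x := hinj hF
  rw [hfix] at hy
  linear_combination (-4) * hy

theorem even_of_F3_bijective (h2 : (2 : K) ≠ 0) {m : ℕ} (hm : ((2 * m : ℕ) : K) ≠ 0)
    (hbij : Function.Bijective fun x : K => F3 x (2 * m)) : Even m := by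
  have h4 := four_ne_zero_of_two_ne_zero h2
  by_contra hodd
  obtain ⟨j, rfl⟩ := Nat.not_even_iff_odd.1 hodd
  obtain ⟨x, hx⟩ := hbij.surjective 0
  have hx : F3 x (2 * (2 * j + 1)) = 0 := hx
  have hu : 1 - 4 * x ≠ 0 := by
    intro hu
    obtain rfl : x = 4⁻¹ := by
      field_simp
      linear_combination -hu
    have := two_pow_mul_F3_inv_four h2 (2 * (2 * j + 1))
    rw [hx, mul_zero] at this
    exact mul_ne_zero h2 hm this.symm
  have hsq := sq_one_sub_four_mul_eq_one_of_injective hbij.injective hu (by rw [hx]; ring)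
  rcases mul_self_eq_one_iff.1 ((sq _).symm.trans hsq) with h | h
  · obtain rfl : x = 0 := by simpa [h4] using h
    rw [show 2 * (2 * j + 1) = 4 * j + 1 + 1 by ring, F3_zero_succ] at hx
    exact one_ne_zero hx
  · obtain rfl : x = 2⁻¹ :=
      eq_inv_of_mul_eq_one_right (mul_left_cancel₀ h2 (by linear_combination -h))
    rw [show 2 * (2 * j + 1) = 4 * j + 2 by ring] at hx
    exact F3_inv_two_four_mul_add_two_ne_zero h2 j hx

theorem Units.eq_one_of_pow_eq_one_of_F3_injective (h2 : (2 : K) ≠ 0) {d : ℕ} (hd : Odd d)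
    (hinj : Function.Injective fun x : K => F3 x (2 * (d + 1))) {g : Kˣ} (hg : g ^ d = 1) :
    g = 1 := by
  have h4 := four_ne_zero_of_two_ne_zero h2
  have hu : 1 - 4 * ((1 - g) / 4) = (g : K) := by
    field_simp
    ring
  have hgd : (g : K) ^ d = 1 := by rw [← Units.val_pow_eq_pow_val, hg, Units.val_one]
  have hsq := sq_one_sub_four_mul_eq_one_of_injective hinj (hu ▸ g.ne_zero)
    (by rw [hu, pow_succ, hgd, one_mul])
  rw [hu] at hsq
  have hg2 : g ^ 2 = 1 := Units.ext (by push_cast; exact hsq)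
  obtain ⟨e, rfl⟩ := hd
  rwa [pow_succ, pow_mul, hg2, one_pow, one_mul] at hg

end F3

theorem stmt16_general {K : Type*} [Field K] [Fintype K] (p : ℕ) (hodd : p ≠ 2)
    [CharP K p] (n : ℕ) (hn : Even n) (hpn : ¬ p ∣ n)
    (hbij : Function.Bijective (fun x : K => F3 x n)) :
    n % 4 = 0 ∧ Nat.gcd ((n - 1) / 2) (Fintype.card K - 1) = 1 := by
  have h2 : (2 : K) ≠ 0 := Ring.two_ne_zero (by rwa [ringChar.eq K p])
  obtain ⟨m, rfl⟩ := hn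
  have hm : ((m + m : ℕ) : K) ≠ 0 := fun h => hpn ((CharP.cast_eq_zero_iff K p _).1 h)
  rw [← two_mul] at hm hbij ⊢
  obtain ⟨l, rfl⟩ := even_of_F3_bijective h2 hm hbij
  have hl : l ≠ 0 := by rintro rfl; simp at hm
  refine ⟨by omega, ?_⟩
  rw [show 2 * (l + l) = 2 * ((2 * (l + l) - 1) / 2 + 1) by omega] at hbij
  rw [← Nat.card_eq_fintype_card, ← Nat.card_units]
  exact Nat.coprime_card_of_forall_pow_eq_one fun g =>
    Units.eq_one_of_pow_eq_one_of_F3_injective h2 ⟨l - 1, by omega⟩ hbij.injective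

theorem stmt16 {K : Type*} [Field K] [Fintype K] (p : ℕ) (hp : p.Prime) (hodd : p ≠ 2)
    [CharP K p] (n : ℕ) (hn : Even n) (hpn : ¬ p ∣ n)
    (hbij : Function.Bijective (fun x : K => F3 x n)) :
    n % 4 = 0 ∧ Nat.gcd ((n - 1) / 2) (Fintype.card K - 1) = 1 :=
  stmt16_general p hodd n hn hpn hbij
end

section
/- Let F_q have odd characteristic and let \epsilon be an element of an extension field of F_q with \epsilon \ne 0, 1. Set y = (\epsilon + 1)/(\epsilon - 1). Then y^2 \in F_q if and only if \epsilon^{q+1} = 1 or \epsilon^{q-1} = 1. -/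
theorem stmt17 {K L : Type*} [Field K] [Field L] [Fintype K] [Algebra K L]
    (hchar : ringChar K ≠ 2) (ε : L) (h0 : ε ≠ 0) (h1 : ε ≠ 1) :
    (((ε + 1) / (ε - 1)) ^ 2) ^ Fintype.card K = ((ε + 1) / (ε - 1)) ^ 2 ↔
      ε ^ (Fintype.card K + 1) = 1 ∨ ε ^ (Fintype.card K - 1) = 1 := by
  set q := Fintype.card K with hq
  have hq1 : 1 ≤ q := Fintype.card_pos
  obtain ⟨p, hpc⟩ := CharP.exists K
  obtain ⟨n, hp, hcard⟩ := @FiniteField.card K _ _ p hpc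
  haveI : CharP L p := charP_of_injective_algebraMap (algebraMap K L).injective p
  haveI : ExpChar L p := ExpChar.prime hp
  have hpne2 : p ≠ 2 := by
    have h := ringChar.eq K p
    rw [← h]; exact hchar
  have h2 : (2 : L) ≠ 0 := by
    intro h
    have := (CharP.cast_eq_zero_iff L p 2).mp (by exact_mod_cast h)
    exact hpne2 ((Nat.prime_dvd_prime_iff_eq hp Nat.prime_two).mp this)
  have hε1 : ε - 1 ≠ 0 := sub_ne_zero.mpr h1
  set a := ε ^ q with ha
  have hfa : (ε + 1) ^ q = a + 1 := by
    rw [hq, hcard, ha, hq, hcard]; simpa using add_pow_expChar_pow ε 1 p ↑n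
  have hfs : (ε - 1) ^ q = a - 1 := by
    rw [hq, hcard, ha, hq, hcard]; simpa using sub_pow_expChar_pow (R := L) (p := p) (n := ↑n) (x := ε) (y := 1)
  have ha1 : a - 1 ≠ 0 := by rw [← hfs]; exact pow_ne_zero _ hε1
  have hLHS : (((ε + 1) / (ε - 1)) ^ 2) ^ q = ((a + 1) / (a - 1)) ^ 2 := by
    rw [← pow_mul, mul_comm, pow_mul, div_pow, hfa, hfs]
  rw [hLHS]
  have key : ((a + 1) / (a - 1)) ^ 2 = ((ε + 1) / (ε - 1)) ^ 2 ↔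
      (ε - a) * (a * ε - 1) = 0 := by
    rw [div_pow, div_pow, div_eq_div_iff (pow_ne_zero _ ha1) (pow_ne_zero _ hε1)]
    constructor
    · intro h
      have h4 : (2 : L) * 2 * ((ε - a) * (a * ε - 1)) = 0 := by ring_nf; ring_nf at h; linear_combination h
      rcases mul_eq_zero.mp h4 with h' | h'
      · exact absurd h' (mul_ne_zero h2 h2)
      · exact h'
    · intro h; linear_combination (2 : L) * 2 * h
  rw [key, mul_eq_zero, sub_eq_zero, sub_eq_zero]
  have e1 : ε = a ↔ ε ^ (q - 1) = 1 := by
    constructor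
    · intro h
      have : ε ^ (q - 1) * ε = 1 * ε := by
        rw [← pow_succ, Nat.sub_add_cancel hq1, ← ha, ← h, one_mul]
      exact mul_right_cancel₀ h0 this
    · intro h
      have : a = ε ^ (q - 1) * ε := by rw [← pow_succ, Nat.sub_add_cancel hq1]
      rw [this, h, one_mul]
  have e2 : a * ε = 1 ↔ ε ^ (q + 1) = 1 := by rw [ha, ← pow_succ]
  rw [e1, e2, or_comm]
end
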